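/- arXiv:1007.2029 — 3 statements merged into one kernel-verified Lean document; each statement's English description precedes it below -/
import Mathlib

section
/- For t ≥ 2, a valued (t,n)-family F with valuation (a_1,...,a_n) achieving the minimum number of SDRs among all such families contains no unsaturated exclusive pair. -/
/-
If `{x, y}` is exclusive but unsaturated, replacing `x` by `y` in every `A_i` with `x ∈ A_i ∌ y`
keeps the family valued: a union can only lose `x`, and it loses it without gaining `y` only for an
index set `I` that separates `x` from `y`, where unsaturation leaves a spare element. The new family
has strictly fewer SDRs: exchanging `x` and `y` in those of its SDRs that take `y` from a set which
lost `x` maps its SDRs injectively into those of `A`, and misses an SDR of `A` that picks `x` from a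
set of `I_x \ I_y` and `y` from a set of `I_y \ I_x`, which exists by Hall's theorem since `t ≥ 2`.
-/

open Finset

/-- Number of SDRs of the family `A`. -/
def numSDR {n : ℕ} (A : Fin n → Finset ℕ) : ℕ :=
  ((Fintype.piFinset A).filter Function.Injective).card

/-- `(t,n)`-family: every nonempty union of `k` sets has at least `k + t` elements. -/
def IsTNFamily (t : ℕ) {n : ℕ} (A : Fin n → Finset ℕ) : Prop :=
  ∀ I : Finset (Fin n), I.Nonempty → I.card + t ≤ (I.biUnion A).card

/-- Valued `(t,n)`-family with valuation `a`. -/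
def IsValuedTN (t : ℕ) {n : ℕ} (a : Fin n → ℕ) (A : Fin n → Finset ℕ) : Prop :=
  (∀ i, 0 < a i) ∧ (∀ i, (A i).card = a i + t) ∧
    ∀ I : Finset (Fin n), 2 ≤ I.card → (∑ i ∈ I, a i) + t ≤ (I.biUnion A).card

/-- `I_x = {i : x ∈ A_i}`. -/
def Ix {n : ℕ} (A : Fin n → Finset ℕ) (x : ℕ) : Finset (Fin n) :=
  Finset.univ.filter fun i => x ∈ A i

/-- `{x,y}` is exclusive. -/
def Exclusive {n : ℕ} (A : Fin n → Finset ℕ) (x y : ℕ) : Prop :=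
  (Ix A x \ Ix A y).Nonempty ∧ (Ix A y \ Ix A x).Nonempty

/-- `{x,y}` is saturated. -/
def Saturated (t : ℕ) {n : ℕ} (a : Fin n → ℕ) (A : Fin n → Finset ℕ) (x y : ℕ) : Prop :=
  ∃ I : Finset (Fin n),
    I ∩ Ix A x ∩ Ix A y = ∅ ∧ (I ∩ (Ix A x \ Ix A y)).Nonempty ∧
    (I ∩ (Ix A y \ Ix A x)).Nonempty ∧ (I.biUnion A).card = (∑ i ∈ I, a i) + t

/-- The modified family `F_y^x`: replace `x` by `y` in each `A_i` with `i ∈ I_x ∩ I_y^c`. -/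
def swapFam {n : ℕ} (A : Fin n → Finset ℕ) (x y : ℕ) : Fin n → Finset ℕ :=
  fun i => if x ∈ A i ∧ y ∉ A i then insert y (A i \ {x}) else A i

def U (t n : ℕ) : ℕ := ∑ j ∈ Finset.range (t + 1), t.choose j * n.choose j * j.factorial

/-- The extremal family `F*`: `A_i* = {i} ∪ {n+1, …, n+t}` (index `i : Fin n` stands for `i+1`). -/
def Astar (t n : ℕ) : Fin n → Finset ℕ := fun i => insert ((i : ℕ) + 1) (Finset.Ioc n (n + t))

/-- `∑_{i < j} a_i a_j`. -/
def pairSum {n : ℕ} (a : Fin n → ℕ) : ℕ :=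
  ∑ p ∈ Finset.univ.filter (fun p : Fin n × Fin n => p.1 < p.2), a p.1 * a p.2

/-- Elementary symmetric polynomial `e_k(a_1,…,a_n)`. -/
def esymm {n : ℕ} (a : Fin n → ℕ) (k : ℕ) : ℕ :=
  ∑ S ∈ Finset.univ.powersetCard k, ∏ i ∈ S, a i

def sdrs {n : ℕ} (A : Fin n → Finset ℕ) : Finset (Fin n → ℕ) :=
  (Fintype.piFinset A).filter Function.Injective

theorem mem_sdrs {n : ℕ} {A : Fin n → Finset ℕ} {f : Fin n → ℕ} :
    f ∈ sdrs A ↔ Function.Injective f ∧ ∀ k, f k ∈ A k := by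
  simp [sdrs, and_comm]

theorem IsValuedTN.isTNFamily {t n : ℕ} {a : Fin n → ℕ} {A : Fin n → Finset ℕ}
    (hA : IsValuedTN t a A) : IsTNFamily t A := by
  obtain ⟨hpos, hcard, hunion⟩ := hA
  intro I hI
  rcases lt_or_ge I.card 2 with hI1 | hI2
  · obtain ⟨i, rfl⟩ := (card_eq_one (s := I)).1 (by have := hI.card_pos; omega)
    simpa [hcard i] using Nat.succ_le_of_lt (hpos i)
  · calc I.card + t ≤ (∑ i ∈ I, a i) + t := by
          gcongr; exact (card_eq_sum_ones I).trans_le (sum_le_sum fun i _ => hpos i)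
      _ ≤ _ := hunion I hI2

theorem IsTNFamily.exists_mem_sdrs_apply_eq {t n : ℕ} {A : Fin n → Finset ℕ}
    (hA : IsTNFamily t A) (ht : 2 ≤ t) {i j : Fin n} (hij : i ≠ j) {x y : ℕ} (hxy : x ≠ y)
    (hx : x ∈ A i) (hy : y ∈ A j) : ∃ g ∈ sdrs A, g i = x ∧ g j = y := by
  classical
  -- Hall for the sets `A k \ {x, y}` with `k ≠ i, j`: the margin `t ≥ 2` pays for removing `x, y`.
  obtain ⟨h, hinj, hmem⟩ := (all_card_le_biUnion_card_iff_exists_injective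
      fun k : {k // k ≠ i ∧ k ≠ j} => A k \ {x, y}).1 fun s => by
    rcases s.eq_empty_or_nonempty with rfl | hs
    · simp
    have hcard := hA (s.map (Function.Embedding.subtype _)) (hs.map)
    have hsdiff : (s.map (Function.Embedding.subtype _)).biUnion A \ {x, y} =
        s.biUnion fun k => A k \ {x, y} := by
      ext z; simp only [mem_sdiff, mem_biUnion, mem_map, Function.Embedding.coe_subtype]; grind
    have := le_card_sdiff {x, y} ((s.map (Function.Embedding.subtype _)).biUnion A)
    rw [card_map] at hcard
    rw [← hsdiff]
    have := card_le_two (a := x) (b := y)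
    omega
  refine ⟨fun k => if hki : k = i then x else if hkj : k = j then y else h ⟨k, hki, hkj⟩,
    mem_sdrs.2 ⟨fun k l hkl => ?_, fun k => ?_⟩, by simp, by simp [hij.symm]⟩
  · have := fun k => mem_sdiff.1 (hmem k)
    simp only at hkl
    split_ifs at hkl <;> grind
  · have := fun k => (mem_sdiff.1 (hmem k)).1
    split_ifs <;> grind

section SwapFamily

variable {n : ℕ} {A : Fin n → Finset ℕ} {x y z : ℕ} {k : Fin n} {I : Finset (Fin n)}

@[simp]
theorem mem_Ix {i : Fin n} : i ∈ Ix A x ↔ x ∈ A i := by simp [Ix]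

theorem mem_swapFam :
    z ∈ swapFam A x y k ↔ z = y ∧ x ∈ A k ∨ z ∈ A k ∧ (z ≠ x ∨ y ∈ A k) := by
  unfold swapFam
  split_ifs with h <;> grind

theorem subset_swapFam_of_not (h : ¬(x ∈ A k ∧ y ∉ A k)) : A k ⊆ swapFam A x y k := by
  intro z hz; grind [mem_swapFam]

/-- `Saturated t a A x y` is `∃ I, SeparatesPair A x y I ∧ #(I.biUnion A) = ∑ i ∈ I, a i + t`. -/
def SeparatesPair (A : Fin n → Finset ℕ) (x y : ℕ) (I : Finset (Fin n)) : Prop :=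
  I ∩ Ix A x ∩ Ix A y = ∅ ∧ (I ∩ (Ix A x \ Ix A y)).Nonempty ∧ (I ∩ (Ix A y \ Ix A x)).Nonempty

theorem card_swapFam (k : Fin n) : (swapFam A x y k).card = (A k).card := by
  unfold swapFam
  split_ifs with h
  · rw [card_insert_of_notMem (by simp [h.2]), card_sdiff_of_subset (by simp [h.1]),
      card_singleton, Nat.sub_add_cancel (card_pos.2 ⟨x, h.1⟩)]
  · rfl

theorem erase_biUnion_subset_biUnion_swapFam :
    (I.biUnion A).erase x ⊆ I.biUnion (swapFam A x y) := by
  intro z hz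
  simp only [mem_erase, mem_biUnion] at hz ⊢
  grind [mem_swapFam]

theorem card_biUnion_le_card_biUnion_swapFam_add_one :
    (I.biUnion A).card ≤ (I.biUnion (swapFam A x y)).card + 1 := by
  have := pred_card_le_card_erase (s := I.biUnion A) (a := x)
  have := card_le_card (erase_biUnion_subset_biUnion_swapFam (I := I) (A := A) (x := x) (y := y))
  omega

theorem card_biUnion_le_card_biUnion_swapFam (hI : ¬SeparatesPair A x y I) :
    (I.biUnion A).card ≤ (I.biUnion (swapFam A x y)).card := by
  by_cases hx : ¬∃ i ∈ I, x ∈ A i ∧ y ∉ A i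
  · exact card_le_card (biUnion_mono fun k hk => subset_swapFam_of_not fun h => hx ⟨k, hk, h⟩)
  obtain ⟨i, hi, hxi, hyi⟩ := not_not.1 hx
  by_cases hxy : ∃ j ∈ I, x ∈ A j ∧ y ∈ A j
  · obtain ⟨j, hj, hxj, hyj⟩ := hxy
    refine card_le_card fun z hz => ?_
    obtain rfl | hzx := eq_or_ne z x
    · exact mem_biUnion.2 ⟨j, hj, subset_swapFam_of_not (by simp [hyj]) hxj⟩
    · exact erase_biUnion_subset_biUnion_swapFam (mem_erase.2 ⟨hzx, hz⟩)
  have hy : y ∉ I.biUnion A := by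
    intro hy
    obtain ⟨j, hj, hyj⟩ := mem_biUnion.1 hy
    refine hI ⟨?_, ⟨i, ?_⟩, ⟨j, ?_⟩⟩
    · ext k; simp only [mem_inter, mem_Ix, notMem_empty, iff_false]; grind
    · simp [hi, hxi, hyi]
    · simp only [mem_inter, mem_sdiff, mem_Ix]; grind
  calc (I.biUnion A).card = (insert y ((I.biUnion A).erase x)).card := by
        rw [card_insert_of_notMem fun h => hy (mem_of_mem_erase h),
          card_erase_add_one (mem_biUnion.2 ⟨i, hi, hxi⟩)]
    _ ≤ _ := card_le_card <| insert_subset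
        (mem_biUnion.2 ⟨i, hi, mem_swapFam.2 (Or.inl ⟨rfl, hxi⟩)⟩)
        erase_biUnion_subset_biUnion_swapFam

end SwapFamily

theorem IsValuedTN.swapFam_of_not_saturated {t n : ℕ} {a : Fin n → ℕ} {A : Fin n → Finset ℕ}
    {x y : ℕ} (hA : IsValuedTN t a A) (hsat : ¬Saturated t a A x y) :
    IsValuedTN t a (swapFam A x y) := by
  obtain ⟨hpos, hcard, hunion⟩ := hA
  refine ⟨hpos, fun k => (card_swapFam k).trans (hcard k), fun I hI => ?_⟩
  by_cases hsep : SeparatesPair A x y I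
  · have hne : (I.biUnion A).card ≠ (∑ i ∈ I, a i) + t :=
      fun h => hsat ⟨I, hsep.1, hsep.2.1, hsep.2.2, h⟩
    have := hunion I hI
    have := card_biUnion_le_card_biUnion_swapFam_add_one (I := I) (A := A) (x := x) (y := y)
    omega
  · exact (hunion I hI).trans (card_biUnion_le_card_biUnion_swapFam hsep)

section Unswap

variable {n : ℕ} {A : Fin n → Finset ℕ} {x y : ℕ}

def unswap (A : Fin n → Finset ℕ) (x y : ℕ) (f : Fin n → ℕ) : Fin n → ℕ :=
  if ∃ i, x ∈ A i ∧ y ∉ A i ∧ f i = y then Equiv.swap x y ∘ f else f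

theorem unswap_mem_sdrs {f : Fin n → ℕ} (hf : f ∈ sdrs (swapFam A x y)) :
    unswap A x y f ∈ sdrs A := by
  rw [mem_sdrs] at hf ⊢
  obtain ⟨hinj, hmem⟩ := hf
  simp only [mem_swapFam] at hmem
  unfold unswap
  split_ifs with h
  · obtain ⟨i, hxi, hyi, hfi⟩ := h
    refine ⟨(Equiv.injective _).comp hinj, fun k => ?_⟩
    have := hmem k
    have := @hinj k i
    simp only [Function.comp_apply, Equiv.swap_apply_def]
    grind
  · push Not at h
    exact ⟨hinj, fun k => by grind⟩

theorem exists_unswap_eq_iff {f : Fin n → ℕ} (hf : f ∈ sdrs (swapFam A x y)) :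
    (∃ i, x ∈ A i ∧ y ∉ A i ∧ unswap A x y f i = x) ↔ ∃ i, x ∈ A i ∧ y ∉ A i ∧ f i = y := by
  have hmem := fun k => mem_swapFam.1 ((mem_sdrs.1 hf).2 k)
  unfold unswap
  split_ifs with h
  · simp [Equiv.swap_apply_eq_iff]
  · grind

theorem unswap_injOn : Set.InjOn (unswap A x y) (sdrs (swapFam A x y)) := by
  intro f hf g hg hfg
  have hc : (∃ i, x ∈ A i ∧ y ∉ A i ∧ f i = y) ↔ ∃ i, x ∈ A i ∧ y ∉ A i ∧ g i = y := by
    rw [← exists_unswap_eq_iff hf, ← exists_unswap_eq_iff hg, hfg]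
  unfold unswap at hfg
  by_cases h : ∃ i, x ∈ A i ∧ y ∉ A i ∧ f i = y
  · rw [if_pos h, if_pos (hc.1 h)] at hfg
    exact (Equiv.injective _).comp_left hfg
  · rwa [if_neg h, if_neg (mt hc.2 h)] at hfg

theorem unswap_ne {f g : Fin n → ℕ} (hf : f ∈ sdrs (swapFam A x y)) {i j : Fin n}
    (hi : x ∈ A i ∧ y ∉ A i) (hj : y ∈ A j ∧ x ∉ A j) (hgi : g i = x) (hgj : g j = y) :
    unswap A x y f ≠ g := by
  rintro rfl
  have h : ∃ i, x ∈ A i ∧ y ∉ A i ∧ f i = y := (exists_unswap_eq_iff hf).1 ⟨i, hi.1, hi.2, hgi⟩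
  have hfj := mem_swapFam.1 ((mem_sdrs.1 hf).2 j)
  simp only [unswap, if_pos h, Function.comp_apply, Equiv.swap_apply_eq_iff,
    Equiv.swap_apply_right] at hgj
  grind

theorem numSDR_swapFam_lt {i j : Fin n} (hi : x ∈ A i ∧ y ∉ A i) (hj : y ∈ A j ∧ x ∉ A j)
    {g : Fin n → ℕ} (hg : g ∈ sdrs A) (hgi : g i = x) (hgj : g j = y) :
    numSDR (swapFam A x y) < numSDR A :=
  calc numSDR (swapFam A x y) = ((sdrs (swapFam A x y)).image (unswap A x y)).card :=
        (card_image_of_injOn unswap_injOn).symm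
    _ ≤ ((sdrs A).erase g).card := card_le_card <| image_subset_iff.2 fun _ hf =>
        mem_erase.2 ⟨unswap_ne hf hi hj hgi hgj, unswap_mem_sdrs hf⟩
    _ < numSDR A := card_erase_lt_of_mem hg

end Unswap

theorem minimal_no_unsaturated (t n : ℕ) (ht : 2 ≤ t) (a : Fin n → ℕ)
    (A : Fin n → Finset ℕ) (hF : IsValuedTN t a A)
    (hmin : ∀ B : Fin n → Finset ℕ, IsValuedTN t a B → numSDR A ≤ numSDR B) :
    ∀ x y : ℕ, Exclusive A x y → Saturated t a A x y := by
  rintro x y ⟨⟨i, hi⟩, ⟨j, hj⟩⟩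
  simp only [mem_sdiff, mem_Ix] at hi hj
  by_contra hsat
  have hxy : x ≠ y := by rintro rfl; exact hi.2 hi.1
  have hij : i ≠ j := by rintro rfl; exact hj.2 hi.1
  obtain ⟨g, hg, hgi, hgj⟩ := hF.isTNFamily.exists_mem_sdrs_apply_eq ht hij hxy hi.1 hj.1
  exact (hmin _ (hF.swapFam_of_not_saturated hsat)).not_gt (numSDR_swapFam_lt hi hj hg hgi hgj)
end

section
/- Let F be a valued (t,n)-family with valuation (a_1,...,a_n). If I, J ⊆ {1,...,n} satisfy I ∩ J ≠ ∅, |⋃_{s∈I} A_s| = ∑_{s∈I} a_s + t and |⋃_{s∈J} A_s| = ∑_{s∈J} a_s + t, then |⋃_{s∈I∪J} A_s| = ∑_{s∈I∪J} a_s + t. -/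
open Finset

/-! The map `K ↦ |⋃_{s ∈ K} A_s|` is submodular while `K ↦ ∑_{s ∈ K} a_s + t` is modular, and the
first dominates the second on nonempty `K`. For tight `I` and `J` with `I ∩ J ≠ ∅` the lower bounds at
`I ∪ J` and `I ∩ J` add up to the submodular upper bound, so both must be equalities. -/

theorem Finset.card_union_biUnion_add_card_inter_biUnion_le {ι α : Type*} [DecidableEq ι]
    [DecidableEq α] (A : ι → Finset α) (I J : Finset ι) :
    ((I ∪ J).biUnion A).card + ((I ∩ J).biUnion A).card
      ≤ (I.biUnion A).card + (J.biUnion A).card :=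
  calc ((I ∪ J).biUnion A).card + ((I ∩ J).biUnion A).card
      ≤ (I.biUnion A ∪ J.biUnion A).card + (I.biUnion A ∩ J.biUnion A).card := by
        rw [union_biUnion]
        gcongr
        exact subset_inter (biUnion_subset_biUnion_of_subset_left A inter_subset_left)
          (biUnion_subset_biUnion_of_subset_left A inter_subset_right)
    _ = (I.biUnion A).card + (J.biUnion A).card := card_union_add_card_inter _ _

theorem IsValuedTN.sum_add_le_card_biUnion {t n : ℕ} {a : Fin n → ℕ} {A : Fin n → Finset ℕ}
    (hF : IsValuedTN t a A) {K : Finset (Fin n)} (hK : K.Nonempty) :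
    (∑ s ∈ K, a s) + t ≤ (K.biUnion A).card := by
  obtain ⟨-, hcard, hunion⟩ := hF
  rcases lt_or_ge K.card 2 with hlt | hK2
  · have hK1 : K.card = 1 := by have := hK.card_pos; omega
    obtain ⟨i, rfl⟩ := card_eq_one.mp hK1
    simp [hcard i]
  · exact hunion K hK2

theorem tight_union (t n : ℕ) (a : Fin n → ℕ) (A : Fin n → Finset ℕ)
    (hF : IsValuedTN t a A) (I J : Finset (Fin n)) (hIJ : (I ∩ J).Nonempty)
    (hI : (I.biUnion A).card = (∑ s ∈ I, a s) + t)
    (hJ : (J.biUnion A).card = (∑ s ∈ J, a s) + t) :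
    ((I ∪ J).biUnion A).card = (∑ s ∈ I ∪ J, a s) + t := by
  have hUnion := hF.sum_add_le_card_biUnion (K := I ∪ J)
    (hIJ.mono (inter_subset_left.trans subset_union_left))
  have hInter := hF.sum_add_le_card_biUnion (K := I ∩ J) hIJ
  have hsub := card_union_biUnion_add_card_inter_biUnion_le A I J
  have hsum : (∑ s ∈ I ∪ J, a s) + (∑ s ∈ I ∩ J, a s) = (∑ s ∈ I, a s) + (∑ s ∈ J, a s) :=
    sum_union_inter
  omega
end

section
/- Let F be a valued (t,n)-family with valuation (a_1,...,a_n) such that |⋃_{i=1}^n A_i| = ∑_{i=1}^n a_i + t. Then the number of unordered pairs {x,y} of elements of ⋃ A_i with I_x ∩ I_y = ∅ is at most ∑_{1 ≤ i < j ≤ n} a_i·a_j. -/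
open Finset

namespace Finset

variable {α M : Type*} [LinearOrder α] [AddCommMonoid M]

theorem sum_offDiag_eq_two_nsmul_sum_filter_lt (s : Finset α) {f : α → α → M}
    (hf : ∀ x y, f x y = f y x) :
    ∑ p ∈ s.offDiag, f p.1 p.2 = 2 • ∑ p ∈ s ×ˢ s with p.1 < p.2, f p.1 p.2 := by
  have hsplit : s.offDiag = {p ∈ s ×ˢ s | p.1 < p.2} ∪ {p ∈ s ×ˢ s | p.2 < p.1} := by
    ext p
    simp only [mem_offDiag, mem_union, mem_filter, mem_product, ne_iff_lt_or_gt]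
    tauto
  have hdisj : Disjoint {p ∈ s ×ˢ s | p.1 < p.2} {p ∈ s ×ˢ s | p.2 < p.1} :=
    disjoint_filter.2 fun _ _ h h' => lt_asymm h h'
  have hswap : ∑ p ∈ s ×ˢ s with p.2 < p.1, f p.1 p.2 = ∑ p ∈ s ×ˢ s with p.1 < p.2, f p.1 p.2 :=
    sum_equiv (Equiv.prodComm α α) (by simp [and_comm]) (by simp [hf])
  rw [hsplit, sum_union hdisj, hswap, two_nsmul]

theorem two_mul_card_filter_lt_eq_card_filter_offDiag (s : Finset α) {r : α → α → Prop}
    [DecidableRel r] (hr : ∀ x y, r x y → r y x) :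
    2 * #{p ∈ s ×ˢ s | p.1 < p.2 ∧ r p.1 p.2} = #{p ∈ s.offDiag | r p.1 p.2} := by
  rw [← filter_filter, card_filter, card_filter, ← smul_eq_mul,
    sum_offDiag_eq_two_nsmul_sum_filter_lt s (f := fun x y => if r x y then 1 else 0)
      fun x y => by simp only [propext ⟨hr x y, hr y x⟩]]

theorem sum_sum_filter_notMem_eq_sum_card_sdiff_nsmul {ι β : Type*} [Fintype ι] [DecidableEq β]
    (A : ι → Finset β) (s : Finset β) (w : ι → M) :
    ∑ x ∈ s, ∑ i with x ∉ A i, w i = ∑ i, #(s \ A i) • w i := by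
  rw [sum_comm' (t' := univ) (s' := fun i => s \ A i) (by simp [and_comm])]
  simp only [sum_const]

end Finset

theorem two_mul_pairSum {n : ℕ} (a : Fin n → ℕ) :
    2 * pairSum a = ∑ i, a i * ∑ j ∈ univ.erase i, a j := by
  rw [pairSum, ← univ_product_univ, ← smul_eq_mul,
    ← sum_offDiag_eq_two_nsmul_sum_filter_lt _ (f := fun i j => a i * a j) fun _ _ => mul_comm _ _,
    sum_finset_product _ univ (fun i => univ.erase i) (by simp [and_comm, eq_comm])]
  simp only [mul_sum]

namespace IsValuedTN

variable {t n : ℕ} {a : Fin n → ℕ} {A : Fin n → Finset ℕ}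

theorem sum_add_le_card_biUnion_s15 (hF : IsValuedTN t a A) {I : Finset (Fin n)}
    (hI : I.Nonempty) : ∑ i ∈ I, a i + t ≤ #(I.biUnion A) := by
  obtain hsingle | htwo := Nat.lt_or_ge #I 2
  · obtain ⟨i, rfl⟩ := (card_eq_one (s := I)).1 (by have := hI.card_pos; omega)
    simp [hF.2.1 i]
  · exact hF.2.2 I htwo

theorem card_filter_disjoint_Ix_le (hF : IsValuedTN t a A)
    (htotal : #(univ.biUnion A) = ∑ i, a i + t) {x : ℕ} (hx : x ∈ univ.biUnion A) :
    #{y ∈ univ.biUnion A | Ix A x ∩ Ix A y = ∅} ≤ ∑ i with x ∉ A i, a i := by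
  have hIx : (Ix A x).Nonempty := by simpa [Ix, filter_nonempty_iff] using hx
  have hsub : {y ∈ univ.biUnion A | Ix A x ∩ Ix A y = ∅} ⊆
      univ.biUnion A \ (Ix A x).biUnion A := by
    intro y hy
    rw [mem_filter] at hy
    refine mem_sdiff.2 ⟨hy.1, fun hyx => ?_⟩
    obtain ⟨i, hix, hiy⟩ := mem_biUnion.1 hyx
    have : i ∈ Ix A x ∩ Ix A y := mem_inter.2 ⟨hix, by simpa [Ix] using hiy⟩
    simp [hy.2] at this
  have hsplit : ∑ i ∈ Ix A x, a i + ∑ i with x ∉ A i, a i = ∑ i, a i :=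
    sum_filter_add_sum_filter_not univ (fun i => x ∈ A i) a
  calc #{y ∈ univ.biUnion A | Ix A x ∩ Ix A y = ∅}
      ≤ #(univ.biUnion A) - #((Ix A x).biUnion A) := by
        rw [← card_sdiff_of_subset (biUnion_subset_biUnion_of_subset_left A (subset_univ _))]
        exact card_le_card hsub
    _ ≤ ∑ i with x ∉ A i, a i := by
        have := hF.sum_add_le_card_biUnion_s15 hIx
        omega

theorem card_sdiff_eq_sum_erase (hF : IsValuedTN t a A)
    (htotal : #(univ.biUnion A) = ∑ i, a i + t) (i : Fin n) :
    #(univ.biUnion A \ A i) = ∑ j ∈ univ.erase i, a j := by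
  rw [card_sdiff_of_subset (subset_biUnion_of_mem A (mem_univ i)), htotal, hF.2.1 i,
    ← add_sum_erase univ a (mem_univ i)]
  omega

end IsValuedTN

open scoped Classical in
theorem disjoint_pairs_upper (t n : ℕ) (a : Fin n → ℕ) (A : Fin n → Finset ℕ)
    (hF : IsValuedTN t a A)
    (htotal : ((Finset.univ : Finset (Fin n)).biUnion A).card = (∑ i, a i) + t) :
    (((Finset.univ.biUnion A) ×ˢ (Finset.univ.biUnion A)).filter
        (fun p => p.1 < p.2 ∧ Ix A p.1 ∩ Ix A p.2 = ∅)).card ≤ pairSum a := by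
  set S := univ.biUnion A
  have hcount : 2 * #{p ∈ S ×ˢ S | p.1 < p.2 ∧ Ix A p.1 ∩ Ix A p.2 = ∅} ≤ 2 * pairSum a :=
    calc 2 * #{p ∈ S ×ˢ S | p.1 < p.2 ∧ Ix A p.1 ∩ Ix A p.2 = ∅}
        = #{p ∈ S.offDiag | Ix A p.1 ∩ Ix A p.2 = ∅} :=
          two_mul_card_filter_lt_eq_card_filter_offDiag S
            (r := fun x y => Ix A x ∩ Ix A y = ∅) fun x y h => by rwa [inter_comm]
      _ ≤ #{p ∈ S ×ˢ S | Ix A p.1 ∩ Ix A p.2 = ∅} :=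
          card_le_card <| filter_subset_filter _ fun p hp =>
            mem_product.2 ⟨(mem_offDiag.1 hp).1, (mem_offDiag.1 hp).2.1⟩
      _ = ∑ x ∈ S, #{y ∈ S | Ix A x ∩ Ix A y = ∅} := by
          simp only [card_filter, sum_product]
      _ ≤ ∑ x ∈ S, ∑ i with x ∉ A i, a i :=
          sum_le_sum fun x hx => hF.card_filter_disjoint_Ix_le htotal hx
      _ = ∑ i, #(S \ A i) * a i := sum_sum_filter_notMem_eq_sum_card_sdiff_nsmul A S a
      _ = 2 * pairSum a := by
          rw [two_mul_pairSum]
          exact sum_congr rfl fun i _ => by rw [hF.card_sdiff_eq_sum_erase htotal, mul_comm]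
  omega
end
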